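/- Let ς = (s_1,…,s_d) be a composition of 2N, let T ∈ CSYT^{(N,N)}_ς, and let φ be a Möbius transformation of the upper half-plane with φ(x_1) < ⋯ < φ(x_d) for a given x ∈ 𝔛_d. Then the fused conformal block function satisfies the covariance 𝓤_T(φ(x_1),…,φ(x_d)) = ∏_{i=1}^d φ'(x_i)^{−s_i²/4} · 𝓤_T(x_1,…,x_d). -/

import Mathlib

open scoped Classical
open MvPolynomial

noncomputable section

/-- `q k = 1 + s 1 + ⋯ + s (k-1)`. -/
def qIdx (s : ℕ → ℕ) (k : ℕ) : ℕ := 1 + ∑ j ∈ Finset.Ico 1 k, s j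

/-- Extension of a permutation of `Fin n` to the 1-based letters `{1, …, n} ⊆ ℕ`. -/
def extendPerm (n : ℕ) (σ : Equiv.Perm (Fin n)) : ℕ → ℕ :=
  fun i => if h : 1 ≤ i ∧ i ≤ n then ((σ ⟨i - 1, by omega⟩ : Fin n) : ℕ) + 1 else i

/-- Membership in the colored symmetric group `S_{s_1} × ⋯ × S_{s_d}`. -/
def InBlocks (n d : ℕ) (s : ℕ → ℕ) (σ : Equiv.Perm (Fin n)) : Prop :=
  ∀ i : Fin n, ∀ k ∈ Finset.Icc 1 d,
    (qIdx s k ≤ (i : ℕ) + 1 ∧ (i : ℕ) + 1 < qIdx s (k + 1)) →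
    (qIdx s k ≤ ((σ i : Fin n) : ℕ) + 1 ∧ ((σ i : Fin n) : ℕ) + 1 < qIdx s (k + 1))

/-- The action of the `ς`-antisymmetrizer `p_ς` on polynomials. -/
def pAct (n d : ℕ) (s : ℕ → ℕ) (f : MvPolynomial ℕ ℝ) : MvPolynomial ℕ ℝ :=
  (∏ k ∈ Finset.Icc 1 d, ((s k).factorial : ℝ))⁻¹ •
    ∑ σ ∈ Finset.univ.filter (InBlocks n d s),
      ((Equiv.Perm.sign σ : ℤ) : ℝ) • MvPolynomial.rename (extendPerm n σ) f

/-- The Specht polynomial of a numbering. -/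
def spechtPoly (cells : Finset (ℕ × ℕ)) (Nb : ℕ × ℕ → ℕ) : MvPolynomial ℕ ℝ :=
  ∏ p ∈ (cells ×ˢ cells).filter (fun p => p.1.2 = p.2.2 ∧ p.2.1 < p.1.1),
    (X (Nb p.1) - X (Nb p.2))

/-- Column-reading order on cells. -/
def colReadLT (c c' : ℕ × ℕ) : Prop :=
  c.2 < c'.2 ∨ (c.2 = c'.2 ∧ c.1 < c'.1)

/-- The standardization `F̃` of a filling `F`. -/
def stdize (s : ℕ → ℕ) (cells : Finset (ℕ × ℕ)) (F : ℕ × ℕ → ℕ) : ℕ × ℕ → ℕ :=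
  fun c => qIdx s (F c) + (cells.filter fun c' => colReadLT c' c ∧ F c' = F c).card

/-- `V_ς(x) = ∏_{k=1}^d ∏_{q_k ≤ i < j < q_{k+1}} (x_j - x_i)`. -/
def vandBlocks (d : ℕ) (s : ℕ → ℕ) : MvPolynomial ℕ ℝ :=
  ∏ k ∈ Finset.Icc 1 d,
    ∏ p ∈ ((Finset.Icc (qIdx s k) (qIdx s (k + 1) - 1)) ×ˢ
            (Finset.Icc (qIdx s k) (qIdx s (k + 1) - 1))).filter (fun p => p.1 < p.2),
      (X p.2 - X p.1)

/-- The exact quotient of `f` by `v`. -/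
def exactQuot (v f : MvPolynomial ℕ ℝ) : MvPolynomial ℕ ℝ :=
  if h : ∃ g, f = v * g then h.choose else 0

/-- The substitution collapsing each block of variables to a single variable. -/
def collapseVar (d : ℕ) (s : ℕ → ℕ) : ℕ → ℕ :=
  fun i => ∑ k ∈ (Finset.Icc 1 d).filter (fun k => qIdx s k ≤ i ∧ i < qIdx s (k + 1)), k

/-- The fused Specht polynomial `𝓕_F`. -/
def fusedSpecht (n d : ℕ) (s : ℕ → ℕ) (cells : Finset (ℕ × ℕ)) (F : ℕ × ℕ → ℕ) :
    MvPolynomial ℕ ℝ :=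
  MvPolynomial.rename (collapseVar d s)
    (exactQuot (vandBlocks d s) (pAct n d s (spechtPoly cells (stdize s cells F))))

/-- The cells of the Young diagram of shape `(N, N)`. -/
def cellsNN (N : ℕ) : Finset (ℕ × ℕ) := (Finset.range 2) ×ˢ (Finset.range N)

/-- The cells of the Young diagram of shape `(2^N)`. -/
def cellsCol (N : ℕ) : Finset (ℕ × ℕ) := (Finset.range N) ×ˢ (Finset.range 2)

/-- Column-strict fillings: weakly increasing along rows, strictly increasing down
columns. -/
def ColStrictFilling (cells : Finset (ℕ × ℕ)) (F : ℕ × ℕ → ℕ) : Prop :=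
  (∀ c ∈ cells, ∀ c' ∈ cells, c.1 = c'.1 → c.2 < c'.2 → F c ≤ F c') ∧
  (∀ c ∈ cells, ∀ c' ∈ cells, c.2 = c'.2 → c.1 < c'.1 → F c < F c')

/-- Content condition. -/
def HasContent (d : ℕ) (s : ℕ → ℕ) (cells : Finset (ℕ × ℕ)) (F : ℕ × ℕ → ℕ) : Prop :=
  ∀ k ∈ Finset.Icc 1 d, (cells.filter fun c => F c = k).card = s k

/-- Normalization off the diagram. -/
def ZeroOff (cells : Finset (ℕ × ℕ)) (F : ℕ × ℕ → ℕ) : Prop :=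
  ∀ c, c ∉ cells → F c = 0

/-- The set `CSYT^{(N,N)}_ς` of column-strict tableaux of shape `(N,N)` and content `ς`. -/
def CSYTsetNN (N d : ℕ) (s : ℕ → ℕ) : Set (ℕ × ℕ → ℕ) :=
  {T | ColStrictFilling (cellsNN N) T ∧ HasContent d s (cellsNN N) T ∧
    ZeroOff (cellsNN N) T}

/-- The transpose `T^t` of a filling of shape `(N,N)` (a filling of shape `(2^N)`). -/
def transposeFill (T : ℕ × ℕ → ℕ) : ℕ × ℕ → ℕ := fun c => T (c.2, c.1)

/-- Evaluation of a polynomial in the 1-based variables `x_1, …, x_m` at `x : Fin m → ℝ`. -/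
def evalAt (m : ℕ) (x : Fin m → ℝ) : MvPolynomial ℕ ℝ → ℝ :=
  MvPolynomial.eval fun k => if h : 1 ≤ k ∧ k ≤ m then x ⟨k - 1, by omega⟩ else 0

/-- The chamber `𝔛_m`. -/
def chamber (m : ℕ) : Set (Fin m → ℝ) := {x | StrictMono x}

/-- The fused conformal block function
`𝓤_T(x) = ∏_{1≤i<j≤d} (x_j - x_i)^{-s_i s_j/2} · 𝓕_{T^t}(x)`. -/
def Ublock (N d : ℕ) (s : ℕ → ℕ) (T : ℕ × ℕ → ℕ) (x : Fin d → ℝ) : ℝ :=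
  (∏ p ∈ Finset.univ.filter (fun p : Fin d × Fin d => p.1 < p.2),
      (x p.2 - x p.1) ^
        (-(((s ((p.1 : ℕ) + 1) * s ((p.2 : ℕ) + 1) : ℕ) : ℝ)) / 2)) *
    evalAt d x (fusedSpecht (2 * N) d s (cellsCol N) (transposeFill T))

/-!
Write `Δ = ae - bc` and `J t = ct + e`, so that `φ u - φ v = Δ (u - v) / (J u * J v)`. Every factor
of the Specht polynomial and of the block Vandermonde `V_ς` is such a difference of variables, and
the antisymmetrizer `p_ς` only permutes variables, so both transform under `φ` by an explicit
power of `Δ` times powers of the `J`. Dividing, the exact quotient `Q = p_ς P_T̃ / V_ς` transforms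
the same way wherever `V_ς` does not vanish, and by continuity also at the collapsed point
`x_{q_k} = ⋯ = x_{q_{k+1}-1}`, where `Q` becomes the fused Specht polynomial.

The prefactor `∏ (x_j - x_i)^(-s_i s_j / 2)` picks up `∏ (Δ / (J x_i * J x_j))^(-s_i s_j / 2)`.
Since `φ` preserves the order of the `x_i`, all `J x_i` have the same sign, so every factor is
positive, and comparing logarithms shows that the two contributions combine into
`∏ (Δ / (J x_i)^2)^(-s_i^2 / 4) = ∏ φ'(x_i)^(-s_i^2 / 4)`.
-/

namespace MobiusCovariance

open Finset

section BigOperators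

variable {α M : Type*} [CommMonoid M]

@[to_additive]
theorem prod_filter_product_mul_eq_prod_pow (S : Finset α) (R : α → α → Prop) [DecidableRel R]
    {m : ℕ} (hR : ∀ i ∈ S, #{j ∈ S | R i j} + #{j ∈ S | R j i} = m) (f : α → M) :
    ∏ p ∈ S ×ˢ S with R p.1 p.2, f p.1 * f p.2 = ∏ i ∈ S, f i ^ m := by
  have fst : ∏ p ∈ S ×ˢ S with R p.1 p.2, f p.1 = ∏ i ∈ S, f i ^ #{j ∈ S | R i j} := by
    rw [prod_filter, prod_product]
    exact prod_congr rfl fun i _ => by rw [← prod_const, prod_filter]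
  have snd : ∏ p ∈ S ×ˢ S with R p.1 p.2, f p.2 = ∏ j ∈ S, f j ^ #{i ∈ S | R i j} := by
    rw [prod_filter, prod_product_right]
    exact prod_congr rfl fun j _ => by rw [← prod_const, prod_filter]
  rw [prod_mul_distrib, fst, snd, ← prod_mul_distrib]
  exact prod_congr rfl fun i hi => by rw [← pow_add, hR i hi]

theorem two_mul_card_filter_product (S : Finset α) (R : α → α → Prop) [DecidableRel R]
    {m : ℕ} (hR : ∀ i ∈ S, #{j ∈ S | R i j} + #{j ∈ S | R j i} = m) :
    2 * #{p ∈ S ×ˢ S | R p.1 p.2} = #S * m := by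
  have h := sum_filter_product_add_eq_sum_nsmul S R hR (fun _ => (1 : ℕ))
  simp only [sum_const, smul_eq_mul, mul_one] at h
  rw [mul_comm, ← h]

theorem card_filter_lt_add_card_filter_gt [LinearOrder α] {S : Finset α} {i : α} (hi : i ∈ S) :
    #{j ∈ S | i < j} + #{j ∈ S | j < i} = #S - 1 := by
  rw [← card_union_of_disjoint (disjoint_filter.2 fun j _ h h' => lt_asymm h h'),
    ← card_erase_of_mem hi]
  congr 1
  ext j
  simp only [mem_union, mem_filter, mem_erase]
  constructor
  · rintro (⟨hj, h⟩ | ⟨hj, h⟩) <;> exact ⟨by rintro rfl; exact lt_irrefl _ h, hj⟩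
  · rintro ⟨hne, hj⟩
    exact (lt_or_gt_of_ne hne).symm.imp (⟨hj, ·⟩) (⟨hj, ·⟩)

theorem two_mul_sum_filter_lt_of_symm {R : Type*} [CommRing R] [LinearOrder α] (S : Finset α)
    (h : α → α → R) (hsymm : ∀ i j, h i j = h j i) :
    2 * ∑ p ∈ S ×ˢ S with p.1 < p.2, h p.1 p.2 = ∑ i ∈ S, ∑ j ∈ S, h i j - ∑ i ∈ S, h i i := by
  have swap : ∑ p ∈ S ×ˢ S with p.2 < p.1, h p.1 p.2 = ∑ p ∈ S ×ˢ S with p.1 < p.2, h p.1 p.2 :=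
    sum_nbij' Prod.swap Prod.swap (by simp +contextual) (by simp +contextual) (by simp) (by simp)
      fun p _ => hsymm _ _
  have diag : ∑ p ∈ S ×ˢ S with p.1 = p.2, h p.1 p.2 = ∑ i ∈ S, h i i := by
    rw [sum_filter, sum_product]
    exact sum_congr rfl fun i hi => by simp [hi]
  have split : ∀ p : α × α, h p.1 p.2 = (if p.1 < p.2 then h p.1 p.2 else 0) +
      (if p.2 < p.1 then h p.1 p.2 else 0) + (if p.1 = p.2 then h p.1 p.2 else 0) := by
    intro p
    rcases lt_trichotomy p.1 p.2 with hp | hp | hp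
    · simp [hp, hp.ne, hp.not_gt]
    · simp [hp]
    · simp [hp, hp.ne', hp.not_gt]
  have total : ∑ i ∈ S, ∑ j ∈ S, h i j = ∑ p ∈ S ×ˢ S with p.1 < p.2, h p.1 p.2 +
      ∑ p ∈ S ×ˢ S with p.2 < p.1, h p.1 p.2 + ∑ p ∈ S ×ˢ S with p.1 = p.2, h p.1 p.2 := by
    rw [← sum_product', sum_congr rfl fun p _ => split p, sum_add_distrib, sum_add_distrib,
      ← sum_filter, ← sum_filter, ← sum_filter]
  rw [total, swap, diag]
  ring

theorem card_filter_lt_product [LinearOrder α] (S : Finset α) :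
    #{p ∈ S ×ˢ S | p.1 < p.2} = (#S).choose 2 := by
  have h := two_mul_card_filter_product S (· < ·) fun _ hi => card_filter_lt_add_card_filter_gt hi
  rw [Nat.choose_two_right, ← h, Nat.mul_div_cancel_left _ two_pos]

@[to_additive]
theorem prod_Icc_eq_prod_fin_succ {M : Type*} [CommMonoid M] (d : ℕ) (f : ℕ → M) :
    ∏ k ∈ Icc 1 d, f k = ∏ i : Fin d, f (i + 1) := by
  rw [← Ico_add_one_right_eq_Icc, prod_Ico_eq_prod_range,
    Fin.prod_univ_eq_prod_range (fun i => f (i + 1))]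
  simp [add_comm]

end BigOperators

section Mobius

variable (a b c e : ℝ)

def mobius (t : ℝ) : ℝ := (a * t + b) / (c * t + e)

variable {a b c e}

theorem mobius_sub {u v : ℝ} (hu : c * u + e ≠ 0) (hv : c * v + e ≠ 0) :
    mobius a b c e u - mobius a b c e v
      = (a * e - b * c) * (u - v) / ((c * u + e) * (c * v + e)) := by
  unfold mobius
  rw [div_sub_div _ _ hu hv]
  ring

theorem prod_mobius_sub_mul_prod {κ : Type*} (P : Finset κ) {f g : κ → ℝ}
    (hf : ∀ k ∈ P, c * f k + e ≠ 0) (hg : ∀ k ∈ P, c * g k + e ≠ 0) :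
    (∏ k ∈ P, (mobius a b c e (f k) - mobius a b c e (g k))) *
        ∏ k ∈ P, ((c * f k + e) * (c * g k + e))
      = (a * e - b * c) ^ #P * ∏ k ∈ P, (f k - g k) := by
  rw [← prod_mul_distrib, ← prod_const, ← prod_mul_distrib]
  refine prod_congr rfl fun k hk => ?_
  rw [mobius_sub (hf k hk) (hg k hk)]
  field_simp [hf k hk, hg k hk]

theorem prod_mobius_vandermonde {α : Type*} [LinearOrder α] (S : Finset α) {u v : α → ℝ}
    (huv : ∀ i ∈ S, c * u i + e ≠ 0 ∧ v i = mobius a b c e (u i)) :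
    (∏ p ∈ S ×ˢ S with p.1 < p.2, (v p.2 - v p.1)) * ∏ i ∈ S, (c * u i + e) ^ (#S - 1)
      = (a * e - b * c) ^ (#S).choose 2 * ∏ p ∈ S ×ˢ S with p.1 < p.2, (u p.2 - u p.1) := by
  have hmem : ∀ p ∈ {p ∈ S ×ˢ S | p.1 < p.2}, p.1 ∈ S ∧ p.2 ∈ S := fun p hp =>
    mem_product.1 (mem_filter.1 hp).1
  have hJ : ∏ i ∈ S, (c * u i + e) ^ (#S - 1)
      = ∏ p ∈ S ×ˢ S with p.1 < p.2, ((c * u p.2 + e) * (c * u p.1 + e)) := by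
    rw [← prod_filter_product_mul_eq_prod_pow S (· < ·)
      fun _ hi => card_filter_lt_add_card_filter_gt hi]
    exact prod_congr rfl fun _ _ => mul_comm _ _
  have hv : ∏ p ∈ S ×ˢ S with p.1 < p.2, (v p.2 - v p.1)
      = ∏ p ∈ S ×ˢ S with p.1 < p.2, (mobius a b c e (u p.2) - mobius a b c e (u p.1)) :=
    prod_congr rfl fun p hp => by rw [(huv _ (hmem p hp).2).2, (huv _ (hmem p hp).1).2]
  rw [hJ, hv, prod_mobius_sub_mul_prod _ (fun p hp => (huv _ (hmem p hp).2).1)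
    (fun p hp => (huv _ (hmem p hp).1).1), card_filter_lt_product]

end Mobius

section Blocks

def block (s : ℕ → ℕ) (k : ℕ) : Finset ℕ := Icc (qIdx s k) (qIdx s (k + 1) - 1)

variable {s : ℕ → ℕ}

theorem one_le_qIdx (k : ℕ) : 1 ≤ qIdx s k := by
  unfold qIdx; omega

theorem qIdx_mono : Monotone (qIdx s) := fun _ _ h =>
  Nat.add_le_add_left (sum_le_sum_of_subset (Ico_subset_Ico le_rfl h)) 1

theorem qIdx_succ {k : ℕ} (hk : 1 ≤ k) : qIdx s (k + 1) = qIdx s k + s k := by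
  unfold qIdx
  rw [sum_Ico_succ_top hk]
  ring

theorem mem_block {k i : ℕ} : i ∈ block s k ↔ qIdx s k ≤ i ∧ i < qIdx s (k + 1) := by
  have := one_le_qIdx (s := s) (k + 1)
  rw [block, mem_Icc]
  omega

theorem card_block {k : ℕ} (hk : 1 ≤ k) : #(block s k) = s k := by
  rw [block, Nat.card_Icc, qIdx_succ hk]
  have := one_le_qIdx (s := s) k
  omega

theorem pairwise_disjoint_block : Pairwise (Function.onFun Disjoint (block s)) := by
  intro k k' hne
  rw [Function.onFun, disjoint_left]
  intro i hi hi'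
  rw [mem_block] at hi hi'
  rcases lt_or_gt_of_ne hne with h | h
  · have := qIdx_mono (s := s) (show k + 1 ≤ k' by omega); omega
  · have := qIdx_mono (s := s) (show k' + 1 ≤ k by omega); omega

theorem biUnion_block (d : ℕ) : (Icc 1 d).biUnion (block s) = Icc 1 (∑ k ∈ Icc 1 d, s k) := by
  induction d with
  | zero => rfl
  | succ d ih =>
    have hq : qIdx s (d + 1) = 1 + ∑ k ∈ Icc 1 d, s k := by
      rw [qIdx, Ico_add_one_right_eq_Icc]
    rw [sum_Icc_succ_top (by omega), ← insert_Icc_right_eq_Icc_add_one (by omega),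
      biUnion_insert, ih]
    ext i
    simp only [mem_union, mem_block, mem_Icc, qIdx_succ (Nat.le_add_left 1 d), hq]
    omega

theorem collapseVar_eq_of_mem_block {d k i : ℕ} (hk : k ∈ Icc 1 d) (hi : i ∈ block s k) :
    collapseVar d s i = k := by
  have hfilter : {k' ∈ Icc 1 d | qIdx s k' ≤ i ∧ i < qIdx s (k' + 1)} = {k} := by
    refine eq_singleton_iff_unique_mem.2 ⟨mem_filter.2 ⟨hk, mem_block.1 hi⟩, fun k' hk' => ?_⟩
    by_contra hne
    exact disjoint_left.1 (pairwise_disjoint_block hne) (mem_block.2 (mem_filter.1 hk').2) hi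
  rw [collapseVar, hfilter, sum_singleton]

theorem prod_Icc_eq_prod_block {M : Type*} [CommMonoid M] {d n : ℕ}
    (hsum : ∑ k ∈ Icc 1 d, s k = n) (g : ℕ → M) :
    ∏ i ∈ Icc 1 n, g i = ∏ k ∈ Icc 1 d, ∏ i ∈ block s k, g i := by
  rw [← hsum, ← biUnion_block, prod_biUnion (pairwise_disjoint_block.set_pairwise _)]

theorem mem_Icc_of_mem_block {d n k i : ℕ} (hsum : ∑ k ∈ Icc 1 d, s k = n) (hk : k ∈ Icc 1 d)
    (hi : i ∈ block s k) : i ∈ Icc 1 n := by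
  rw [← hsum, ← biUnion_block]
  exact mem_biUnion.2 ⟨k, hk, hi⟩

theorem collapseVar_mem_Icc {d n i : ℕ} (hsum : ∑ k ∈ Icc 1 d, s k = n) (hi : i ∈ Icc 1 n) :
    collapseVar d s i ∈ Icc 1 d := by
  rw [← hsum, ← biUnion_block, mem_biUnion] at hi
  obtain ⟨k, hk, hik⟩ := hi
  rwa [collapseVar_eq_of_mem_block hk hik]

theorem prod_block_pow_comp_collapseVar {M : Type*} [CommMonoid M] {d : ℕ} (g : ℕ → M)
    (m : ℕ → ℕ) : ∏ k ∈ Icc 1 d, ∏ i ∈ block s k, g (collapseVar d s i) ^ m k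
      = ∏ k ∈ Icc 1 d, g k ^ (s k * m k) := by
  refine prod_congr rfl fun k hk => ?_
  rw [prod_congr rfl fun i hi => by rw [collapseVar_eq_of_mem_block hk hi], prod_const,
    card_block (mem_Icc.1 hk).1, ← pow_mul, Nat.mul_comm]

end Blocks

section Tableaux

variable {d : ℕ} {s : ℕ → ℕ} {cells : Finset (ℕ × ℕ)} {F : ℕ × ℕ → ℕ}

theorem colReadLT_irrefl (c : ℕ × ℕ) : ¬ colReadLT c c := by
  unfold colReadLT; omega

theorem colReadLT_trans {c c' c'' : ℕ × ℕ} (h : colReadLT c c') (h' : colReadLT c' c'') :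
    colReadLT c c'' := by
  unfold colReadLT at *; omega

theorem colReadLT_or_colReadLT {c c' : ℕ × ℕ} (h : c ≠ c') : colReadLT c c' ∨ colReadLT c' c := by
  unfold colReadLT
  by_contra! h'
  exact h (Prod.ext (by omega) (by omega))

theorem mem_Icc_of_hasContent (hF : HasContent d s cells F) (hcard : ∑ k ∈ Icc 1 d, s k = #cells)
    {c : ℕ × ℕ} (hc : c ∈ cells) : F c ∈ Icc 1 d := by
  have hfull : {c ∈ cells | F c ∈ Icc 1 d} = cells := by
    refine eq_of_subset_of_card_le (filter_subset _ _) ?_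
    rw [← sum_card_fiberwise_eq_card_filter, ← hcard]
    exact (sum_congr rfl hF).ge
  rw [← hfull] at hc
  exact (mem_filter.1 hc).2

theorem stdize_mem_block (hF : HasContent d s cells F) (hcard : ∑ k ∈ Icc 1 d, s k = #cells)
    {c : ℕ × ℕ} (hc : c ∈ cells) : stdize s cells F c ∈ block s (F c) := by
  have hk := mem_Icc_of_hasContent hF hcard hc
  have hrank : #{c' ∈ cells | colReadLT c' c ∧ F c' = F c} < s (F c) := by
    rw [← hF _ hk]
    refine card_lt_card ⟨fun c' hc' => ?_, fun hsub => ?_⟩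
    · exact mem_filter.2 ⟨(mem_filter.1 hc').1, (mem_filter.1 hc').2.2⟩
    · exact colReadLT_irrefl c (mem_filter.1 (hsub (mem_filter.2 ⟨hc, rfl⟩))).2.1
  rw [mem_block, stdize, qIdx_succ (mem_Icc.1 hk).1]
  omega

theorem stdize_lt_of_colReadLT {c c' : ℕ × ℕ} (hc : c ∈ cells) (hF : F c = F c')
    (hlt : colReadLT c c') : stdize s cells F c < stdize s cells F c' := by
  unfold stdize
  rw [hF]
  refine Nat.add_lt_add_left (card_lt_card ⟨fun c'' h => ?_, fun hsub => ?_⟩) _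
  · obtain ⟨h1, h2, h3⟩ := mem_filter.1 h
    exact mem_filter.2 ⟨h1, colReadLT_trans h2 hlt, h3⟩
  · exact colReadLT_irrefl c (mem_filter.1 (hsub (mem_filter.2 ⟨hc, hlt, hF⟩))).2.1

theorem stdize_injOn (hF : HasContent d s cells F) (hcard : ∑ k ∈ Icc 1 d, s k = #cells) :
    Set.InjOn (stdize s cells F) cells := by
  intro c hc c' hc' heq
  by_contra hne
  by_cases hFc : F c = F c'
  · rcases colReadLT_or_colReadLT hne with h | h
    · exact (stdize_lt_of_colReadLT hc hFc h).ne heq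
    · exact (stdize_lt_of_colReadLT hc' hFc.symm h).ne heq.symm
  · exact disjoint_left.1 (pairwise_disjoint_block hFc) (stdize_mem_block hF hcard hc)
      (heq ▸ stdize_mem_block hF hcard hc')

theorem stdize_bijOn (hF : HasContent d s cells F) (hcard : ∑ k ∈ Icc 1 d, s k = #cells) :
    Set.BijOn (stdize s cells F) cells (Icc 1 #cells) := by
  have hmaps : Set.MapsTo (stdize s cells F) cells (Icc 1 #cells) := fun c hc =>
    mem_Icc_of_mem_block hcard (mem_Icc_of_hasContent hF hcard hc) (stdize_mem_block hF hcard hc)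
  refine ⟨hmaps, stdize_injOn hF hcard, surjOn_of_injOn_of_card_le _ hmaps
    (stdize_injOn hF hcard) (by simp)⟩

theorem card_cellsCol (N : ℕ) : #(cellsCol N) = 2 * N := by
  simp [cellsCol, mul_comm]

theorem card_filter_cellsCol_column {N : ℕ} {c : ℕ × ℕ} (hc : c ∈ cellsCol N) (P : ℕ → Prop)
    [DecidablePred P] : #{c' ∈ cellsCol N | c'.2 = c.2 ∧ P c'.1} = #{r ∈ range N | P r} := by
  have h := filter_product (s := range N) (t := range 2) P (· = c.2)
  rw [cellsCol, filter_congr fun _ _ => and_comm, h, card_product, filter_eq',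
    if_pos (mem_product.1 hc).2, card_singleton, mul_one]

theorem hasContent_transposeFill {N d : ℕ} {s : ℕ → ℕ} {T : ℕ × ℕ → ℕ}
    (hT : HasContent d s (cellsNN N) T) : HasContent d s (cellsCol N) (transposeFill T) := by
  intro k hk
  rw [← hT k hk]
  refine card_bij' (fun p _ => p.swap) (fun p _ => p.swap) ?_ ?_ (fun _ _ => rfl)
    (fun _ _ => rfl) <;>
    · intro p hp
      rw [mem_filter] at hp ⊢
      exact ⟨by simpa [cellsCol, cellsNN, and_comm] using hp.1, hp.2⟩

end Tableaux

section Covariance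

open Filter Topology

variable {a b c e : ℝ}

theorem eval_spechtPoly_mobius {N : ℕ} {Nb : ℕ × ℕ → ℕ}
    (hNb : Set.BijOn Nb (cellsCol N) (Icc 1 (2 * N))) {u v : ℕ → ℝ}
    (huv : ∀ i ∈ Icc 1 (2 * N), c * u i + e ≠ 0 ∧ v i = mobius a b c e (u i)) :
    eval v (spechtPoly (cellsCol N) Nb) * ∏ i ∈ Icc 1 (2 * N), (c * u i + e) ^ (N - 1)
      = (a * e - b * c) ^ (N * (N - 1)) * eval u (spechtPoly (cellsCol N) Nb) := by
  set P := {p ∈ cellsCol N ×ˢ cellsCol N | p.1.2 = p.2.2 ∧ p.2.1 < p.1.1}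
  have hcolumn : ∀ cl ∈ cellsCol N, #{c' ∈ cellsCol N | cl.2 = c'.2 ∧ c'.1 < cl.1}
      + #{c' ∈ cellsCol N | c'.2 = cl.2 ∧ cl.1 < c'.1} = N - 1 := by
    intro cl hc
    have hbelow : #{c' ∈ cellsCol N | cl.2 = c'.2 ∧ c'.1 < cl.1} = #{r ∈ range N | r < cl.1} := by
      rw [← card_filter_cellsCol_column hc]
      simp only [eq_comm]
    rw [hbelow, card_filter_cellsCol_column hc, add_comm,
      card_filter_lt_add_card_filter_gt (mem_product.1 hc).1, card_range]
  have hcard : #P = N * (N - 1) := by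
    have h := two_mul_card_filter_product _ _ hcolumn
    rw [card_cellsCol, mul_assoc] at h
    exact Nat.eq_of_mul_eq_mul_left two_pos h
  have hmem : ∀ p ∈ P, Nb p.1 ∈ Icc 1 (2 * N) ∧ Nb p.2 ∈ Icc 1 (2 * N) := fun p hp =>
    (mem_product.1 (mem_filter.1 hp).1).imp (fun h => hNb.mapsTo h) (fun h => hNb.mapsTo h)
  have hJ : ∏ i ∈ Icc 1 (2 * N), (c * u i + e) ^ (N - 1)
      = ∏ p ∈ P, ((c * u (Nb p.1) + e) * (c * u (Nb p.2) + e)) := by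
    rw [← prod_nbij (f := fun cl => (c * u (Nb cl) + e) ^ (N - 1)) Nb hNb.mapsTo hNb.injOn
      hNb.surjOn fun _ _ => rfl]
    exact (prod_filter_product_mul_eq_prod_pow _ _ hcolumn _).symm
  have hv : ∏ p ∈ P, (v (Nb p.1) - v (Nb p.2))
      = ∏ p ∈ P, (mobius a b c e (u (Nb p.1)) - mobius a b c e (u (Nb p.2))) :=
    prod_congr rfl fun p hp => by rw [(huv _ (hmem p hp).1).2, (huv _ (hmem p hp).2).2]
  simp only [spechtPoly, map_prod, map_sub, eval_X]
  rw [hJ, hv, prod_mobius_sub_mul_prod _ (fun p hp => (huv _ (hmem p hp).1).1)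
    (fun p hp => (huv _ (hmem p hp).2).1), hcard]

theorem extendPerm_mem_Icc {n : ℕ} (σ : Equiv.Perm (Fin n)) {i : ℕ} (hi : i ∈ Icc 1 n) :
    extendPerm n σ i ∈ Icc 1 n := by
  rw [mem_Icc] at hi ⊢
  rw [extendPerm, dif_pos hi]
  omega

theorem prod_Icc_comp_extendPerm {M : Type*} [CommMonoid M] {n : ℕ} (σ : Equiv.Perm (Fin n))
    (g : ℕ → M) : ∏ i ∈ Icc 1 n, g (extendPerm n σ i) = ∏ i ∈ Icc 1 n, g i := by
  have hsucc : ∀ i : Fin n, extendPerm n σ (i + 1) = σ i + 1 := fun i => by simp [extendPerm]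
  simp only [prod_Icc_eq_prod_fin_succ, hsucc]
  exact Equiv.prod_comp σ fun i => g (i + 1)

theorem eval_pAct_mul_eq {n d : ℕ} {s : ℕ → ℕ} {f : MvPolynomial ℕ ℝ} {u v : ℕ → ℝ} {A K : ℝ}
    (h : ∀ σ : Equiv.Perm (Fin n),
      eval (v ∘ extendPerm n σ) f * A = K * eval (u ∘ extendPerm n σ) f) :
    eval v (pAct n d s f) * A = K * eval u (pAct n d s f) := by
  simp only [pAct, smul_eval, map_sum, eval_rename, mul_assoc, sum_mul, mul_sum, h]
  exact sum_congr rfl fun σ _ => by ring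

theorem eval_pAct_spechtPoly_mobius {N d : ℕ} {s : ℕ → ℕ} {Nb : ℕ × ℕ → ℕ}
    (hNb : Set.BijOn Nb (cellsCol N) (Icc 1 (2 * N))) {u v : ℕ → ℝ}
    (huv : ∀ i ∈ Icc 1 (2 * N), c * u i + e ≠ 0 ∧ v i = mobius a b c e (u i)) :
    eval v (pAct (2 * N) d s (spechtPoly (cellsCol N) Nb))
        * ∏ i ∈ Icc 1 (2 * N), (c * u i + e) ^ (N - 1)
      = (a * e - b * c) ^ (N * (N - 1))
        * eval u (pAct (2 * N) d s (spechtPoly (cellsCol N) Nb)) := by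
  refine eval_pAct_mul_eq fun σ => ?_
  rw [← prod_Icc_comp_extendPerm σ]
  exact eval_spechtPoly_mobius hNb fun i hi => huv _ (extendPerm_mem_Icc σ hi)

theorem eval_vandBlocks_mobius {d n : ℕ} {s : ℕ → ℕ} (hsum : ∑ k ∈ Icc 1 d, s k = n)
    {u v : ℕ → ℝ} (huv : ∀ i ∈ Icc 1 n, c * u i + e ≠ 0 ∧ v i = mobius a b c e (u i)) :
    eval v (vandBlocks d s) * ∏ k ∈ Icc 1 d, ∏ i ∈ block s k, (c * u i + e) ^ (s k - 1)
      = (a * e - b * c) ^ (∑ k ∈ Icc 1 d, (s k).choose 2) * eval u (vandBlocks d s) := by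
  simp only [vandBlocks, map_prod, map_sub, eval_X]
  rw [← prod_mul_distrib, ← prod_pow_eq_pow_sum, ← prod_mul_distrib]
  refine prod_congr rfl fun k hk => ?_
  have huv' : ∀ i ∈ block s k, c * u i + e ≠ 0 ∧ v i = mobius a b c e (u i) := fun i hi =>
    huv i (mem_Icc_of_mem_block hsum hk hi)
  have := prod_mobius_vandermonde _ huv'
  rwa [card_block (mem_Icc.1 hk).1] at this

theorem eval_vandBlocks_collapseVar_add_smul_ne_zero {d : ℕ} {s : ℕ → ℕ} (X : ℕ → ℝ) {t : ℝ}
    (ht : t ≠ 0) : eval (fun i => X (collapseVar d s i) + t * i) (vandBlocks d s) ≠ 0 := by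
  simp only [vandBlocks, map_prod, map_sub, eval_X]
  refine prod_ne_zero_iff.2 fun k hk => prod_ne_zero_iff.2 fun p hp => ?_
  obtain ⟨hpp, hlt⟩ := mem_filter.1 hp
  obtain ⟨hp1, hp2⟩ := mem_product.1 hpp
  rw [collapseVar_eq_of_mem_block hk hp1, collapseVar_eq_of_mem_block hk hp2,
    add_sub_add_left_eq_sub, ← mul_sub]
  exact mul_ne_zero ht (sub_ne_zero.2 (Nat.cast_injective.ne hlt.ne'))

theorem eval_quotient_mobius {N d : ℕ} {s : ℕ → ℕ} (hsum : ∑ k ∈ Icc 1 d, s k = 2 * N)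
    {Nb : ℕ × ℕ → ℕ} (hNb : Set.BijOn Nb (cellsCol N) (Icc 1 (2 * N)))
    (hΔ : a * e - b * c ≠ 0) {Q : MvPolynomial ℕ ℝ}
    (hQ : pAct (2 * N) d s (spechtPoly (cellsCol N) Nb) = vandBlocks d s * Q) {u v : ℕ → ℝ}
    (huv : ∀ i ∈ Icc 1 (2 * N), c * u i + e ≠ 0 ∧ v i = mobius a b c e (u i))
    (hV : eval u (vandBlocks d s) ≠ 0) :
    eval v Q * (∏ i ∈ Icc 1 (2 * N), (c * u i + e) ^ (N - 1))
        * (a * e - b * c) ^ (∑ k ∈ Icc 1 d, (s k).choose 2)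
      = (a * e - b * c) ^ (N * (N - 1)) * eval u Q
        * ∏ k ∈ Icc 1 d, ∏ i ∈ block s k, (c * u i + e) ^ (s k - 1) := by
  have hP := eval_pAct_spechtPoly_mobius (d := d) (s := s) hNb huv
  have hVmob := eval_vandBlocks_mobius hsum huv
  rw [hQ, map_mul, map_mul] at hP
  have hVv : eval v (vandBlocks d s) ≠ 0 :=
    left_ne_zero_of_mul (hVmob ▸ mul_ne_zero (pow_ne_zero _ hΔ) hV)
  apply mul_left_cancel₀ (mul_ne_zero hVv hV)
  linear_combination
    (eval u (vandBlocks d s) * (a * e - b * c) ^ (∑ k ∈ Icc 1 d, (s k).choose 2)) * hP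
      - ((a * e - b * c) ^ (N * (N - 1)) * eval u (vandBlocks d s) * eval u Q) * hVmob

theorem continuousAt_eval_ite_mobius (Q : MvPolynomial ℕ ℝ) (S : Finset ℕ) {w : ℝ → ℕ → ℝ}
    (hw : ∀ i, Continuous fun t => w t i) {t₀ : ℝ} (hpole : ∀ i ∈ S, c * w t₀ i + e ≠ 0)
    (z : ℕ → ℝ) :
    ContinuousAt (fun t => eval (fun i => if i ∈ S then mobius a b c e (w t i) else z i) Q) t₀ := by
  refine (continuous_eval Q).continuousAt.comp (continuousAt_pi.2 fun i => ?_)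
  by_cases hi : i ∈ S
  · simp only [if_pos hi, mobius]
    exact ContinuousAt.div (f := fun t => a * w t i + b) (g := fun t => c * w t i + e)
      (by fun_prop) (by fun_prop) (hpole i hi)
  · simp only [if_neg hi]
    exact continuousAt_const

theorem eval_quotient_collapseVar_mobius {N d : ℕ} {s : ℕ → ℕ}
    (hsum : ∑ k ∈ Icc 1 d, s k = 2 * N) {Nb : ℕ × ℕ → ℕ}
    (hNb : Set.BijOn Nb (cellsCol N) (Icc 1 (2 * N))) (hΔ : a * e - b * c ≠ 0)
    {Q : MvPolynomial ℕ ℝ} (hQ : pAct (2 * N) d s (spechtPoly (cellsCol N) Nb) = vandBlocks d s * Q)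
    {X X' : ℕ → ℝ} (hX : ∀ k ∈ Icc 1 d, c * X k + e ≠ 0 ∧ X' k = mobius a b c e (X k)) :
    eval (X' ∘ collapseVar d s) Q * (∏ k ∈ Icc 1 d, (c * X k + e) ^ (s k * (N - 1)))
        * (a * e - b * c) ^ (∑ k ∈ Icc 1 d, (s k).choose 2)
      = (a * e - b * c) ^ (N * (N - 1)) * eval (X ∘ collapseVar d s) Q
        * ∏ k ∈ Icc 1 d, (c * X k + e) ^ (s k * (s k - 1)) := by
  -- `vandBlocks` vanishes at the collapsed point, so `eval_quotient_mobius` is applied along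
  -- `t ↦ X ∘ collapseVar d s + t • id` for small `t ≠ 0`, and the identity passes to `t = 0`.
  set u : ℝ → ℕ → ℝ := fun t i => X (collapseVar d s i) + t * i
  have hu : ∀ i, Continuous fun t => u t i := fun i => by fun_prop
  have hu₀ : u 0 = X ∘ collapseVar d s := funext fun i => by simp [u]
  have hpole : ∀ i ∈ Icc 1 (2 * N), c * u 0 i + e ≠ 0 := fun i hi => by
    simpa [hu₀] using (hX _ (collapseVar_mem_Icc hsum hi)).1
  set H : ℝ → ℝ := fun t => eval (fun i => if i ∈ Icc 1 (2 * N) then mobius a b c e (u t i)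
      else X' (collapseVar d s i)) Q * (∏ i ∈ Icc 1 (2 * N), (c * u t i + e) ^ (N - 1))
    * (a * e - b * c) ^ (∑ k ∈ Icc 1 d, (s k).choose 2)
  set K : ℝ → ℝ := fun t => (a * e - b * c) ^ (N * (N - 1)) * eval (u t) Q
    * ∏ k ∈ Icc 1 d, ∏ i ∈ block s k, (c * u t i + e) ^ (s k - 1)
  have hH : ContinuousAt H 0 :=
    ((continuousAt_eval_ite_mobius Q _ hu hpole _).mul (by fun_prop)).mul continuousAt_const
  have hK : ContinuousAt K 0 :=
    (continuousAt_const.mul ((continuous_eval Q).comp (continuous_pi hu)).continuousAt).mul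
      (by fun_prop)
  have hpole_near : ∀ᶠ t in 𝓝 0, ∀ i ∈ Icc 1 (2 * N), c * u t i + e ≠ 0 :=
    (eventually_all_finset _).2 fun i hi =>
      (by fun_prop : ContinuousAt (fun t => c * u t i + e) 0).eventually_ne (hpole i hi)
  have hHK : H =ᶠ[𝓝[≠] 0] K := by
    filter_upwards [eventually_nhdsWithin_of_eventually_nhds hpole_near, self_mem_nhdsWithin]
      with t hpole_t ht
    exact eval_quotient_mobius hsum hNb hΔ hQ (fun i hi => ⟨hpole_t i hi, if_pos hi⟩)
      (eval_vandBlocks_collapseVar_add_smul_ne_zero X ht)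
  have hX' : (fun i => if i ∈ Icc 1 (2 * N) then mobius a b c e (u 0 i)
      else X' (collapseVar d s i)) = X' ∘ collapseVar d s := funext fun i => by
    split_ifs with hi
    · rw [hu₀, Function.comp_apply, Function.comp_apply, (hX _ (collapseVar_mem_Icc hsum hi)).2]
    · rfl
  have h₀ : H 0 = K 0 := ((hH.eventuallyEq_nhds_iff_eventuallyEq_nhdsNE hK).1 hHK).eq_of_nhds
  simp only [H, K] at h₀
  rw [hX', hu₀, prod_Icc_eq_prod_block hsum] at h₀
  simpa only [Function.comp_apply, prod_block_pow_comp_collapseVar (fun j => c * X j + e)] using h₀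

theorem evalAt_fusedSpecht_mobius {N d : ℕ} {s : ℕ → ℕ} (hsum : ∑ k ∈ Icc 1 d, s k = 2 * N)
    {F : ℕ × ℕ → ℕ} (hF : HasContent d s (cellsCol N) F) (hΔ : a * e - b * c ≠ 0)
    (x : Fin d → ℝ) (hpole : ∀ i, c * x i + e ≠ 0) :
    evalAt d (fun i => mobius a b c e (x i)) (fusedSpecht (2 * N) d s (cellsCol N) F)
        * (∏ i : Fin d, (c * x i + e) ^ (s (i + 1) * (N - 1)))
        * (a * e - b * c) ^ (∑ i : Fin d, (s (i + 1)).choose 2)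
      = (a * e - b * c) ^ (N * (N - 1)) * evalAt d x (fusedSpecht (2 * N) d s (cellsCol N) F)
        * ∏ i : Fin d, (c * x i + e) ^ (s (i + 1) * (s (i + 1) - 1)) := by
  unfold fusedSpecht exactQuot
  -- without divisibility `exactQuot` is `0` and both sides vanish
  split_ifs with hdiv
  · have hNb := stdize_bijOn hF (hsum.trans (card_cellsCol N).symm)
    rw [card_cellsCol] at hNb
    have h := eval_quotient_collapseVar_mobius hsum hNb hΔ hdiv.choose_spec
      (X := fun k => if h : 1 ≤ k ∧ k ≤ d then x ⟨k - 1, by omega⟩ else 0)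
      (X' := fun k => if h : 1 ≤ k ∧ k ≤ d then mobius a b c e (x ⟨k - 1, by omega⟩) else 0)
      fun k hk => by simp [dif_pos (mem_Icc.1 hk), hpole]
    simp only [prod_Icc_eq_prod_fin_succ, sum_Icc_eq_sum_fin_succ] at h
    simpa [evalAt, eval_rename] using h
  · simp [evalAt]

end Covariance

section Prefactor

variable {ι : Type*}

theorem prod_pow_pos_of_forall_mul_pos (S : Finset ι) {J : ι → ℝ} (hJ : ∀ i j, 0 < J i * J j)
    (m : ι → ℕ) (hm : Even (∑ i ∈ S, m i)) : 0 < ∏ i ∈ S, J i ^ m i := by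
  rcases S.eq_empty_or_nonempty with rfl | ⟨i₀, -⟩
  · simp
  have hJ₀ : J i₀ ≠ 0 := fun h => by simpa [h] using hJ i₀ i₀
  have hprod : 0 < (∏ i ∈ S, J i ^ m i) * J i₀ ^ (∑ i ∈ S, m i) := by
    rw [← prod_pow_eq_pow_sum, ← prod_mul_distrib]
    exact prod_pos fun i _ => by rw [← mul_pow]; exact pow_pos (hJ i i₀) _
  exact (mul_pos_iff_of_pos_right (hm.pow_pos hJ₀)).1 hprod

variable {a b c e : ℝ}

theorem mul_pos_of_strictMono_mobius [LinearOrder ι] (hΔ : 0 < a * e - b * c) {x : ι → ℝ}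
    (hx : StrictMono x) (hpole : ∀ i, c * x i + e ≠ 0)
    (hord : StrictMono fun i => mobius a b c e (x i)) (i j : ι) :
    0 < (c * x i + e) * (c * x j + e) := by
  have hlt : ∀ {k l}, k < l → 0 < (c * x k + e) * (c * x l + e) := fun {k l} h => by
    have hpos := sub_pos.2 (hord h)
    rw [mobius_sub (hpole l) (hpole k), mul_comm (c * x l + e)] at hpos
    exact (div_pos_iff_of_pos_left (mul_pos hΔ (sub_pos.2 (hx h)))).1 hpos
  rcases lt_trichotomy i j with h | rfl | h
  · exact hlt h
  · exact mul_self_pos.2 (hpole i)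
  · exact mul_comm (c * x j + e) _ ▸ hlt h

theorem prod_mobius_sub_rpow [Fintype ι] [LinearOrder ι] (hΔ : 0 < a * e - b * c) {x : ι → ℝ}
    (hx : StrictMono x) (hpole : ∀ i, c * x i + e ≠ 0)
    (hord : StrictMono fun i => mobius a b c e (x i)) (r : ι × ι → ℝ) :
    ∏ p ∈ univ.filter (fun p : ι × ι => p.1 < p.2),
        (mobius a b c e (x p.2) - mobius a b c e (x p.1)) ^ r p
      = (∏ p ∈ univ.filter (fun p : ι × ι => p.1 < p.2), (x p.2 - x p.1) ^ r p)
        * ∏ p ∈ univ.filter (fun p : ι × ι => p.1 < p.2),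
            ((a * e - b * c) / ((c * x p.1 + e) * (c * x p.2 + e))) ^ r p := by
  rw [← prod_mul_distrib]
  refine prod_congr rfl fun p hp => ?_
  have hlt := (mem_filter.1 hp).2
  rw [mobius_sub (hpole _) (hpole _), ← Real.mul_rpow (sub_pos.2 (hx hlt)).le
    (div_pos hΔ (mul_pos_of_strictMono_mobius hΔ hx hpole hord _ _)).le]
  congr 1
  field_simp [hpole p.1, hpole p.2]

-- `prod_mobius_factor_eq` after taking logarithms: `G = log Δ`, `L i = log (J i)`, `w i = t i`.
theorem sum_filter_lt_log_identity [Fintype ι] [LinearOrder ι] (w L : ι → ℝ) (G n : ℝ)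
    (hw : ∑ i, w i = 2 * n) :
    ∑ p ∈ univ ×ˢ univ with p.1 < p.2, -(w p.1 * w p.2) / 2 * (G - (L p.1 + L p.2))
        + n * (n - 1) * G + ∑ i, w i * (w i - 1) * L i
      = ∑ i, -(w i ^ 2) / 4 * (G - 2 * L i) + ∑ i, w i * (n - 1) * L i
        + (∑ i, w i * (w i - 1) / 2) * G := by
  have hpairs := two_mul_sum_filter_lt_of_symm univ
    (fun i j => -(w i * w j) / 2 * (G - (L i + L j))) fun i j => by ring
  have hdouble : ∑ i, ∑ j, -(w i * w j) / 2 * (G - (L i + L j))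
      = -(G / 2) * (∑ i, w i) ^ 2 + (∑ i, w i) * ∑ i, w i * L i := by
    have h : ∀ i j, -(w i * w j) / 2 * (G - (L i + L j))
        = -(G / 2) * (w i * w j) + (w i * L i) * w j / 2 + w i * (w j * L j) / 2 := by
      intros; ring
    simp only [h, sum_add_distrib, ← mul_sum, ← sum_mul, ← sum_div, sq]
    ring
  have hsingle : ∑ i, (w i * (w i - 1) * L i - -(w i ^ 2) / 4 * (G - 2 * L i)
      - w i * (n - 1) * L i - w i * (w i - 1) / 2 * G)
      = ∑ i, (-(w i * w i) / 2 * (G - (L i + L i)) / 2 + G / 2 * w i - n * (w i * L i)) :=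
    sum_congr rfl fun i _ => by ring
  simp only [sum_sub_distrib, sum_add_distrib, ← mul_sum, ← sum_mul, ← sum_div] at hsingle ⊢
  rw [hdouble, hw] at hpairs
  rw [hw] at hsingle
  linear_combination hpairs / 2 + hsingle

theorem log_prod_div_mul_rpow {κ : Type*} (P : Finset κ) {Δ : ℝ} (hΔ : 0 < Δ) {f g : κ → ℝ}
    (hfg : ∀ k, 0 < f k * g k) (r : κ → ℝ) :
    Real.log (∏ k ∈ P, (Δ / (f k * g k)) ^ r k)
      = ∑ k ∈ P, r k * (Real.log Δ - (Real.log (f k) + Real.log (g k))) := by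
  rw [Real.log_prod fun k _ => (Real.rpow_pos_of_pos (div_pos hΔ (hfg k)) _).ne']
  refine sum_congr rfl fun k _ => ?_
  rw [Real.log_rpow (div_pos hΔ (hfg k)), Real.log_div hΔ.ne' (hfg k).ne',
    Real.log_mul (left_ne_zero_of_mul (hfg k).ne') (right_ne_zero_of_mul (hfg k).ne')]

theorem prod_mobius_factor_eq [Fintype ι] [LinearOrder ι] {N : ℕ} (hN : 0 < N) (t : ι → ℕ)
    (ht : ∑ i, t i = 2 * N) {Δ : ℝ} (hΔ : 0 < Δ) {J : ι → ℝ} (hJ : ∀ i j, 0 < J i * J j) :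
    (∏ p ∈ univ.filter (fun p : ι × ι => p.1 < p.2),
        (Δ / (J p.1 * J p.2)) ^ (-((t p.1 * t p.2 : ℕ) : ℝ) / 2))
        * Δ ^ (N * (N - 1)) * ∏ i, J i ^ (t i * (t i - 1))
      = (∏ i, (Δ / J i ^ 2) ^ (-((t i : ℝ) ^ 2) / 4))
        * ((∏ i, J i ^ (t i * (N - 1))) * Δ ^ (∑ i, (t i).choose 2)) := by
  have hJ₀ : ∀ i, J i ≠ 0 := fun i => left_ne_zero_of_mul (hJ i i).ne'
  have hC : 0 < ∏ p ∈ univ.filter (fun p : ι × ι => p.1 < p.2),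
      (Δ / (J p.1 * J p.2)) ^ (-((t p.1 * t p.2 : ℕ) : ℝ) / 2) :=
    prod_pos fun p _ => Real.rpow_pos_of_pos (div_pos hΔ (hJ _ _)) _
  have hR : 0 < ∏ i, (Δ / J i ^ 2) ^ (-((t i : ℝ) ^ 2) / 4) :=
    prod_pos fun i _ => Real.rpow_pos_of_pos (div_pos hΔ (sq (J i) ▸ hJ i i)) _
  have hP₁ : 0 < ∏ i, J i ^ (t i * (N - 1)) := by
    refine prod_pow_pos_of_forall_mul_pos _ hJ _ ?_
    rw [← sum_mul, ht, mul_assoc]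
    exact even_two_mul _
  have hP₂ : 0 < ∏ i, J i ^ (t i * (t i - 1)) :=
    prod_pos fun i _ => (Nat.even_mul_pred_self _).pow_pos (hJ₀ i)
  have logC := log_prod_div_mul_rpow (univ.filter (fun p : ι × ι => p.1 < p.2)) hΔ
    (fun p => hJ p.1 p.2) fun p => -((t p.1 * t p.2 : ℕ) : ℝ) / 2
  have logR := log_prod_div_mul_rpow univ hΔ (fun i => hJ i i) fun i => -((t i : ℝ) ^ 2) / 4
  simp only [← sq, ← two_mul] at logR
  have logPow : ∀ m : ι → ℕ, Real.log (∏ i, J i ^ m i) = ∑ i, (m i : ℝ) * Real.log (J i) :=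
    fun m => by
      rw [Real.log_prod fun i _ => pow_ne_zero _ (hJ₀ i)]
      exact sum_congr rfl fun i _ => Real.log_pow _ _
  refine Real.log_injOn_pos (mul_pos (mul_pos hC (pow_pos hΔ _)) hP₂)
    (mul_pos hR (mul_pos hP₁ (pow_pos hΔ _))) ?_
  rw [Real.log_mul (mul_pos hC (pow_pos hΔ _)).ne' hP₂.ne', Real.log_mul hC.ne' (pow_pos hΔ _).ne',
    Real.log_mul hR.ne' (mul_pos hP₁ (pow_pos hΔ _)).ne', Real.log_mul hP₁.ne' (pow_pos hΔ _).ne',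
    logC, logR, logPow, logPow, Real.log_pow, Real.log_pow]
  have hcast : ∀ n : ℕ, ((n * (n - 1) : ℕ) : ℝ) = n * (n - 1) := fun n => by
    rcases n with _ | n <;> simp
  have key := sum_filter_lt_log_identity (fun i => (t i : ℝ)) (fun i => Real.log (J i))
    (Real.log Δ) N (by exact_mod_cast ht)
  rw [univ_product_univ] at key
  simp only [hcast, Nat.cast_mul, Nat.cast_sum, Nat.cast_choose_two, Nat.cast_sub hN, Nat.cast_one]
  linear_combination key

end Prefactor

end MobiusCovariance

open MobiusCovariance in
theorem Ublock_mobius_covariance_general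
    (N d : ℕ) (hN : 0 < N) (s : ℕ → ℕ)
    (hsum : ∑ k ∈ Finset.Icc 1 d, s k = 2 * N)
    (T : ℕ × ℕ → ℕ) (hT : T ∈ CSYTsetNN N d s)
    (a b c e : ℝ) (hdet : b * c < a * e)
    (x : Fin d → ℝ) (hx : StrictMono x)
    (hpole : ∀ i, c * x i + e ≠ 0)
    (hord : StrictMono fun i => (a * x i + b) / (c * x i + e)) :
    Ublock N d s T (fun i => (a * x i + b) / (c * x i + e))
      = (∏ i : Fin d,
          ((a * e - b * c) / (c * x i + e) ^ 2) ^
            (-(((s ((i : ℕ) + 1) : ℝ)) ^ 2) / 4)) *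
        Ublock N d s T x := by
  have hΔ : 0 < a * e - b * c := sub_pos.2 hdet
  have hJ := mul_pos_of_strictMono_mobius hΔ hx hpole hord
  have hfused := evalAt_fusedSpecht_mobius hsum (hasContent_transposeFill hT.2.1) hΔ.ne' x hpole
  have hfactor := prod_mobius_factor_eq hN (fun i : Fin d => s (i + 1))
    ((sum_Icc_eq_sum_fin_succ d s).symm.trans hsum) hΔ hJ
  change Ublock N d s T (fun i => mobius a b c e (x i)) = _
  simp only [Ublock]
  rw [prod_mobius_sub_rpow hΔ hx hpole hord]
  set A := ∏ p ∈ Finset.univ.filter (fun p : Fin d × Fin d => p.1 < p.2),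
    (x p.2 - x p.1) ^ (-(((s ((p.1 : ℕ) + 1) * s ((p.2 : ℕ) + 1) : ℕ) : ℝ)) / 2)
  set C := ∏ p ∈ Finset.univ.filter (fun p : Fin d × Fin d => p.1 < p.2),
    ((a * e - b * c) / ((c * x p.1 + e) * (c * x p.2 + e))) ^
      (-(((s ((p.1 : ℕ) + 1) * s ((p.2 : ℕ) + 1) : ℕ) : ℝ)) / 2)
  set F := evalAt d x (fusedSpecht (2 * N) d s (cellsCol N) (transposeFill T))
  have hne : (∏ i : Fin d, (c * x i + e) ^ (s (i + 1) * (N - 1)))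
      * (a * e - b * c) ^ (∑ i : Fin d, (s (i + 1)).choose 2) ≠ 0 :=
    mul_ne_zero (Finset.prod_ne_zero_iff.2 fun i _ => pow_ne_zero _ (hpole i))
      (pow_ne_zero _ hΔ.ne')
  apply mul_right_cancel₀ hne
  linear_combination (A * C) * hfused + (A * F) * hfactor

/-- Möbius covariance of the fused conformal block functions. For
`T ∈ CSYT^{(N,N)}_ς` and a Möbius transformation `φ` of the upper half-plane preserving
the order of the points,
`𝓤_T(φ(x_1), …, φ(x_d)) = ∏_i φ'(x_i)^{-s_i²/4} 𝓤_T(x_1, …, x_d)`. -/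
theorem Ublock_mobius_covariance
    (N d : ℕ) (hN : 0 < N) (hd : 0 < d) (s : ℕ → ℕ)
    (hpos : ∀ k ∈ Finset.Icc 1 d, 0 < s k)
    (hsum : ∑ k ∈ Finset.Icc 1 d, s k = 2 * N)
    (T : ℕ × ℕ → ℕ) (hT : T ∈ CSYTsetNN N d s)
    (a b c e : ℝ) (hdet : b * c < a * e)
    (x : Fin d → ℝ) (hx : StrictMono x)
    (hpole : ∀ i, c * x i + e ≠ 0)
    (hord : StrictMono fun i => (a * x i + b) / (c * x i + e)) :
    Ublock N d s T (fun i => (a * x i + b) / (c * x i + e))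
      = (∏ i : Fin d,
          ((a * e - b * c) / (c * x i + e) ^ 2) ^
            (-(((s ((i : ℕ) + 1) : ℝ)) ^ 2) / 4)) *
        Ublock N d s T x :=
  Ublock_mobius_covariance_general N d hN s hsum T hT a b c e hdet x hx hpole hord
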